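/- For a finite group G acting on a finite set X, χ^orb(X, G) is an integer; more precisely χ^orb(X,G) = Σ over conjugacy classes [g] of G of χ(X^g / C(g)), where C(g) is the centralizer of g, hence χ^orb(X,G) = (1/|G|) Σ_{commuting pairs} |X^{⟨g₁,g₂⟩}| ∈ ℤ. -/
import Mathlib


open scoped Classical

/-- The orbifold Euler characteristic of a finite `G`-set `X`:
`χ^orb(X,G) = (1/|G|) Σ_{(g₁,g₂) commuting} χ(X^{⟨g₁,g₂⟩})`. -/
noncomputable def chiOrb (G X : Type*) [Group G] [Fintype G] [MulAction G X] [Fintype X] : ℚ :=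
  (Fintype.card G : ℚ)⁻¹ *
    ∑ p : G × G, if p.1 * p.2 = p.2 * p.1 then
      (Nat.card {x : X // ∀ g ∈ Subgroup.closure ({p.1, p.2} : Set G), g • x = x} : ℚ)
    else 0

/-- The centralizer `C(g)` acts on the fixed-point set `X^g`. -/
instance centralizerFixedAction (G X : Type*) [Group G] [MulAction G X] (g : G) :
    MulAction ↥(Subgroup.centralizer ({g} : Set G)) {x : X // g • x = x} where
  smul h x := ⟨(h : G) • (x : X), by
    have hc : g * (h : G) = (h : G) * g :=
      Subgroup.mem_centralizer_iff.mp h.2 g (Set.mem_singleton g)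
    calc g • (h : G) • (x : X) = (g * (h : G)) • (x : X) := (mul_smul _ _ _).symm
      _ = ((h : G) * g) • (x : X) := by rw [hc]
      _ = (h : G) • g • (x : X) := mul_smul _ _ _
      _ = (h : G) • (x : X) := by rw [x.2]⟩
  one_smul x := Subtype.ext (one_smul G (x : X))
  mul_smul h h' x := Subtype.ext (mul_smul (h : G) (h' : G) (x : X))

section Aux
variable {G X : Type*} [Group G] [MulAction G X]

lemma closureFix_iff (a b : G) (x : X) :
    (∀ g ∈ Subgroup.closure ({a, b} : Set G), g • x = x) ↔ a • x = x ∧ b • x = x := by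
  constructor
  · intro h
    exact ⟨h a (Subgroup.subset_closure (by simp)), h b (Subgroup.subset_closure (by simp))⟩
  · rintro ⟨ha, hb⟩ g hg
    have : Subgroup.closure ({a, b} : Set G) ≤ MulAction.stabilizer G x := by
      rw [Subgroup.closure_le]
      rintro y (rfl | rfl) <;> assumption
    exact this hg

lemma aux_conj_comm {c a b : G} (hc : c * a = b * c) : a * c⁻¹ = c⁻¹ * b := by
  rw [eq_inv_mul_iff_mul_eq, ← mul_assoc, hc, mul_assoc, mul_inv_cancel, mul_one]

/-- conjugation moves fixed points. -/
def conjFixEquiv (c a b : G) (hc : c * a = b * c) :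
    {x : X // a • x = x} ≃ {x : X // b • x = x} where
  toFun x := ⟨c • (x : X), by rw [← mul_smul, ← hc, mul_smul, x.2]⟩
  invFun y := ⟨c⁻¹ • (y : X), by rw [← mul_smul, aux_conj_comm hc, mul_smul, y.2]⟩
  left_inv x := Subtype.ext (inv_smul_smul c (x : X))
  right_inv y := Subtype.ext (smul_inv_smul c (y : X))

lemma conj_mem_centralizer {c a b : G} (hc : c * a = b * c) {h : G}
    (hh : h ∈ Subgroup.centralizer ({a} : Set G)) :
    c * h * c⁻¹ ∈ Subgroup.centralizer ({b} : Set G) := by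
  rw [Subgroup.mem_centralizer_iff] at hh ⊢
  intro m hm
  rw [Set.mem_singleton_iff.mp hm]
  have ha : a * h = h * a := hh a rfl
  calc b * (c * h * c⁻¹) = (b * c) * h * c⁻¹ := by group
    _ = c * (a * h) * c⁻¹ := by rw [← hc]; group
    _ = c * h * (a * c⁻¹) := by rw [ha]; group
    _ = c * h * c⁻¹ * b := by rw [aux_conj_comm hc]; group

/-- smul on fixed subtype is the obvious one. -/
lemma cfa_smul (g : G) (h : ↥(Subgroup.centralizer ({g} : Set G))) (x : {x : X // g • x = x}) :
    ((h • x : {x : X // g • x = x}) : X) = (h : G) • (x : X) := rfl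

/-- The number of orbits of the centralizer of `g` on the fixed points of `g`. -/
noncomputable def nOrb (G X : Type*) [Group G] [MulAction G X] (g : G) : ℕ :=
  Nat.card (Quotient (MulAction.orbitRel ↥(Subgroup.centralizer ({g} : Set G))
    {x : X // g • x = x}))

lemma conj_orbit_imp {c a b : G} (hc : c * a = b * c) (x y : {x : X // a • x = x})
    (h : MulAction.orbitRel ↥(Subgroup.centralizer ({a} : Set G)) {x : X // a • x = x} x y) :
    MulAction.orbitRel ↥(Subgroup.centralizer ({b} : Set G)) {x : X // b • x = x}
      (conjFixEquiv c a b hc x) (conjFixEquiv c a b hc y) := by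
  rw [MulAction.orbitRel_apply, MulAction.mem_orbit_iff] at h ⊢
  obtain ⟨k, hk⟩ := h
  refine ⟨⟨c * (k : G) * c⁻¹, conj_mem_centralizer hc k.2⟩, Subtype.ext ?_⟩
  have hk' : (k : G) • (y : X) = (x : X) := by
    have := congrArg Subtype.val hk
    rwa [cfa_smul] at this
  show (c * (k : G) * c⁻¹) • (c • (y : X)) = c • (x : X)
  rw [← mul_smul]
  rw [show c * (k : G) * c⁻¹ * c = c * (k : G) by group, mul_smul, hk']

lemma nOrb_conj {a b : G} (h : IsConj a b) : nOrb G X a = nOrb G X b := by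
  rw [isConj_iff] at h
  obtain ⟨c, hcc⟩ := h
  have hc : c * a = b * c := by rw [← hcc]; group
  have hc' : c⁻¹ * b = a * c⁻¹ := (aux_conj_comm hc).symm
  apply Nat.card_congr
  refine Quotient.congr (conjFixEquiv c a b hc) ?_
  intro x y
  constructor
  · exact conj_orbit_imp hc x y
  · intro h2
    have h3 := conj_orbit_imp hc' _ _ h2
    have ex : conjFixEquiv c⁻¹ b a hc' (conjFixEquiv c a b hc x) = x :=
      Subtype.ext (inv_smul_smul c (x : X))
    have ey : conjFixEquiv c⁻¹ b a hc' (conjFixEquiv c a b hc y) = y :=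
      Subtype.ext (inv_smul_smul c (y : X))
    rwa [ex, ey] at h3

/-- conjugation gives a bijection of centralizers. -/
def conjCentralizerEquiv (c a b : G) (hc : c * a = b * c) :
    ↥(Subgroup.centralizer ({a} : Set G)) ≃ ↥(Subgroup.centralizer ({b} : Set G)) where
  toFun h := ⟨c * (h : G) * c⁻¹, conj_mem_centralizer hc h.2⟩
  invFun h := ⟨c⁻¹ * (h : G) * c⁻¹⁻¹, conj_mem_centralizer (aux_conj_comm hc).symm h.2⟩
  left_inv h := Subtype.ext (by group)
  right_inv h := Subtype.ext (by group)

lemma card_centralizer_conj {a b : G} (h : IsConj a b) :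
    Nat.card ↥(Subgroup.centralizer ({a} : Set G))
      = Nat.card ↥(Subgroup.centralizer ({b} : Set G)) := by
  rw [isConj_iff] at h
  obtain ⟨c, hcc⟩ := h
  have hc : c * a = b * c := by rw [← hcc]; group
  exact Nat.card_congr (conjCentralizerEquiv c a b hc)

end Aux

section Main
variable {G X : Type*} [Group G] [Fintype G] [MulAction G X] [Fintype X]

/-- the fixed set of the closure is the fixed set of `b` inside the fixed set of `a`. -/
def closureFixEquiv (a b : G) (hb : b ∈ Subgroup.centralizer ({a} : Set G)) :
    {x : X // ∀ g ∈ Subgroup.closure ({a, b} : Set G), g • x = x} ≃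
      (MulAction.fixedBy {x : X // a • x = x} (⟨b, hb⟩ : ↥(Subgroup.centralizer ({a} : Set G)))) where
  toFun x := ⟨⟨(x : X), ((closureFix_iff a b (x : X)).mp x.2).1⟩,
    Subtype.ext ((closureFix_iff a b (x : X)).mp x.2).2⟩
  invFun y := ⟨((y : {x : X // a • x = x}) : X),
    (closureFix_iff a b _).mpr ⟨(y : {x : X // a • x = x}).2, congrArg Subtype.val y.2⟩⟩
  left_inv x := rfl
  right_inv y := rfl

lemma burnside_step (a : G) :
    (∑ b : G, if a * b = b * a then
      (Nat.card {x : X // ∀ g ∈ Subgroup.closure ({a, b} : Set G), g • x = x} : ℚ) else 0)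
      = (nOrb G X a : ℚ) * (Nat.card ↥(Subgroup.centralizer ({a} : Set G)) : ℚ) := by
  classical
  have hmem : ∀ b : G, (a * b = b * a) ↔ b ∈ Subgroup.centralizer ({a} : Set G) := by
    intro b
    rw [Subgroup.mem_centralizer_iff]
    simp
  calc (∑ b : G, if a * b = b * a then
      (Nat.card {x : X // ∀ g ∈ Subgroup.closure ({a, b} : Set G), g • x = x} : ℚ) else 0)
      = ∑ b : G, if b ∈ Subgroup.centralizer ({a} : Set G) then
          (Nat.card {x : X // ∀ g ∈ Subgroup.closure ({a, b} : Set G), g • x = x} : ℚ) else 0 := by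
        refine Finset.sum_congr rfl fun b _ => ?_
        rw [if_congr (hmem b) rfl rfl]
    _ = ∑ b ∈ Finset.univ.filter (fun b => b ∈ Subgroup.centralizer ({a} : Set G)),
          (Nat.card {x : X // ∀ g ∈ Subgroup.closure ({a, b} : Set G), g • x = x} : ℚ) :=
        (Finset.sum_filter _ _).symm
    _ = ∑ h : ↥(Subgroup.centralizer ({a} : Set G)),
          (Nat.card {x : X // ∀ g ∈ Subgroup.closure ({a, (h : G)} : Set G), g • x = x} : ℚ) := by
        refine Finset.sum_subtype _ (fun b => ?_) _
        simp
    _ = ∑ h : ↥(Subgroup.centralizer ({a} : Set G)),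
          (Nat.card (MulAction.fixedBy {x : X // a • x = x} h) : ℚ) := by
        refine Finset.sum_congr rfl fun h _ => ?_
        congr 1
        exact Nat.card_congr (closureFixEquiv a (h : G) h.2)
    _ = ((∑ h : ↥(Subgroup.centralizer ({a} : Set G)),
          Fintype.card (MulAction.fixedBy {x : X // a • x = x} h) : ℕ) : ℚ) := by
        push_cast
        refine Finset.sum_congr rfl fun h _ => ?_
        rw [Nat.card_eq_fintype_card]
    _ = (nOrb G X a : ℚ) * (Nat.card ↥(Subgroup.centralizer ({a} : Set G)) : ℚ) := by
        rw [MulAction.sum_card_fixedBy_eq_card_orbits_mul_card_group]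
        rw [nOrb]
        push_cast
        rw [Nat.card_eq_fintype_card, Nat.card_eq_fintype_card]

lemma fiber_card_mul (c : ConjClasses G) (rep : ConjClasses G → G)
    (hrep : ∀ c, ConjClasses.mk (rep c) = c) :
    ((Finset.univ.filter (fun a : G => ConjClasses.mk a = c)).card : ℚ)
      * (Nat.card ↥(Subgroup.centralizer ({rep c} : Set G)) : ℚ) = (Fintype.card G : ℚ) := by
  have h1 : (Finset.univ.filter (fun a : G => ConjClasses.mk a = c)).card
      = Nat.card (MulAction.orbit (ConjAct G) (rep c)) := by
    rw [← Fintype.card_subtype, ← Nat.card_eq_fintype_card]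
    apply Nat.card_congr
    have e1 : {a : G // ConjClasses.mk a = c} ≃ (MulAction.orbit (ConjAct G) (rep c)) := by
      rw [ConjAct.orbit_eq_carrier_conjClasses, hrep c]
      exact Equiv.subtypeEquivRight fun a => (ConjClasses.mem_carrier_iff_mk_eq).symm
    exact e1
  have h2 : Nat.card ↥(Subgroup.centralizer ({rep c} : Set G))
      = Nat.card (MulAction.stabilizer (ConjAct G) (rep c)) :=
    Subgroup.nat_card_centralizer_nat_card_stabilizer _
  rw [h1, h2, Nat.card_eq_fintype_card, Nat.card_eq_fintype_card,
    ← Nat.cast_mul, MulAction.card_orbit_mul_card_stabilizer_eq_card_group]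
  exact congrArg _ (Fintype.card_congr ConjAct.ofConjAct.toEquiv)

end Main

/-- for a finite group `G` acting on a finite set `X`, the orbifold Euler
characteristic `χ^orb(X,G)` is an integer; more precisely, it equals the sum over
conjugacy classes `[g]` of `G` of `χ(X^g / C(g))`, the number of orbits of the
centralizer of `g` on the fixed-point set of `g`. -/
theorem chiOrb_integer_eq_sum_over_conjClasses (G X : Type*) [Group G] [Fintype G]
    [MulAction G X] [Fintype X] (rep : ConjClasses G → G)
    (hrep : ∀ c, ConjClasses.mk (rep c) = c) :
    chiOrb G X =
      ∑ c : ConjClasses G,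
        (Nat.card
          (Quotient (MulAction.orbitRel ↥(Subgroup.centralizer ({rep c} : Set G))
            {x : X // (rep c) • x = x})) : ℚ) ∧
    ∃ n : ℤ, chiOrb G X = (n : ℚ) := by
  classical
  have hG : (Fintype.card G : ℚ) ≠ 0 := by positivity
  have key : chiOrb G X = ∑ c : ConjClasses G, (nOrb G X (rep c) : ℚ) := by
    rw [chiOrb, Fintype.sum_prod_type]
    rw [Finset.sum_congr rfl (fun a _ => burnside_step a)]
    rw [← Finset.sum_fiberwise Finset.univ (ConjClasses.mk : G → ConjClasses G)
      (fun a => (nOrb G X a : ℚ) * (Nat.card ↥(Subgroup.centralizer ({a} : Set G)) : ℚ))]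
    have inner : ∀ c : ConjClasses G,
        (∑ a ∈ Finset.univ.filter (fun a : G => ConjClasses.mk a = c),
          (nOrb G X a : ℚ) * (Nat.card ↥(Subgroup.centralizer ({a} : Set G)) : ℚ))
        = (Fintype.card G : ℚ) * (nOrb G X (rep c) : ℚ) := by
      intro c
      have hconj : ∀ a ∈ Finset.univ.filter (fun a : G => ConjClasses.mk a = c),
          IsConj (rep c) a := by
        intro a ha
        rw [Finset.mem_filter] at ha
        rw [← ConjClasses.mk_eq_mk_iff_isConj, hrep, ha.2]
      calc (∑ a ∈ Finset.univ.filter (fun a : G => ConjClasses.mk a = c),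
          (nOrb G X a : ℚ) * (Nat.card ↥(Subgroup.centralizer ({a} : Set G)) : ℚ))
          = ∑ a ∈ Finset.univ.filter (fun a : G => ConjClasses.mk a = c),
            (nOrb G X (rep c) : ℚ) * (Nat.card ↥(Subgroup.centralizer ({rep c} : Set G)) : ℚ) := by
            refine Finset.sum_congr rfl fun a ha => ?_
            rw [nOrb_conj (hconj a ha), card_centralizer_conj (hconj a ha)]
        _ = ((Finset.univ.filter (fun a : G => ConjClasses.mk a = c)).card : ℚ)
            * ((nOrb G X (rep c) : ℚ) * (Nat.card ↥(Subgroup.centralizer ({rep c} : Set G)) : ℚ)) := by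
            rw [Finset.sum_const, nsmul_eq_mul]
        _ = (Fintype.card G : ℚ) * (nOrb G X (rep c) : ℚ) := by
            rw [show ((Finset.univ.filter (fun a : G => ConjClasses.mk a = c)).card : ℚ)
              * ((nOrb G X (rep c) : ℚ) * (Nat.card ↥(Subgroup.centralizer ({rep c} : Set G)) : ℚ))
              = ((Finset.univ.filter (fun a : G => ConjClasses.mk a = c)).card : ℚ)
              * (Nat.card ↥(Subgroup.centralizer ({rep c} : Set G)) : ℚ) * (nOrb G X (rep c) : ℚ) by ring]
            rw [fiber_card_mul c rep hrep]
    rw [Finset.sum_congr rfl (fun c _ => inner c), ← Finset.mul_sum]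
    rw [← mul_assoc, inv_mul_cancel₀ hG, one_mul]
  refine ⟨key, ⟨∑ c : ConjClasses G, (nOrb G X (rep c) : ℤ), ?_⟩⟩
  rw [key]
  push_cast
  rfl
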